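/- Let X be an infinite type and let S be a Tychonoff (completely regular Hausdorff) topological semigroup such that the square S × S is pseudocompact, i.e., every continuous real-valued function on S × S is bounded. Then every semigroup homomorphism h from the semigroup of matrix units B_λ (λ = |X|) into S is annihilating, i.e., h is a constant map. -/

import Mathlib

open scoped Classical

universe u v

/-- The semigroup of λ×λ-matrix units over the index type `X` (of cardinality λ):
the set `(X × X) ∪ {0}`, realized as `Option (X × X)` with `none` as the zero. -/
abbrev MatrixUnits (X : Type u) : Type u := Option (X × X)

/-- Multiplication of matrix units: `(a,b)·(c,d) = (a,d)` if `b = c`, and `0` otherwise;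
`0` is a two-sided zero. -/
noncomputable def muMul {X : Type u} : MatrixUnits X → MatrixUnits X → MatrixUnits X
  | some (a, b), some (c, d) => if b = c then some (a, d) else none
  | none, _ => none
  | some _, none => none

noncomputable instance {X : Type u} : Semigroup (MatrixUnits X) where
  mul := muMul
  mul_assoc x y z := by
    show muMul (muMul x y) z = muMul x (muMul y z)
    rcases x with _ | ⟨a, b⟩ <;> rcases y with _ | ⟨c, d⟩ <;> rcases z with _ | ⟨e, f⟩ <;>
      simp only [muMul] <;> split_ifs <;> simp_all [muMul]

/-- The band (set of idempotents) of the semigroup of matrix units: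
`{(a,a) : a ∈ X} ∪ {0}`. -/
def MUBand (X : Type u) : Set (MatrixUnits X) :=
  insert none {x : MatrixUnits X | ∃ a : X, x = some (a, a)}

/- ================================================================================== -/
/- Auxiliary material for the proof.                                                  -/
/- ================================================================================== -/

section MuAlgebra

variable {X : Type u}

lemma mu_none_mul (w : MatrixUnits X) : (none : MatrixUnits X) * w = none := by
  show muMul none w = none
  cases w <;> rfl

lemma mu_mul_none (w : MatrixUnits X) : w * (none : MatrixUnits X) = none := by
  show muMul w none = none
  rcases w with _ | ⟨a, b⟩ <;> rfl

lemma mu_some_some (a b c d : X) :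
    (some (a, b) : MatrixUnits X) * some (c, d) = if b = c then some (a, d) else none := rfl

/-- If a homomorphism from the matrix units collapses some nonzero element onto the image
of zero, then it is constant. -/
lemma mu_collapse {S : Type v} [Semigroup S] (h : MatrixUnits X → S)
    (hh : ∀ a b : MatrixUnits X, h (a * b) = h a * h b)
    (c d : X) (hcd : h (some (c, d)) = h none) :
    ∀ w : MatrixUnits X, h w = h none := by
  intro w
  rcases w with _ | ⟨p, q⟩
  · rfl
  · have e1 : (some (p, c) : MatrixUnits X) * some (c, d) = some (p, d) := by
      rw [mu_some_some, if_pos rfl]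
    have e2 : (some (p, d) : MatrixUnits X) * some (d, q) = some (p, q) := by
      rw [mu_some_some, if_pos rfl]
    calc h (some (p, q)) = h ((some (p, c) * some (c, d)) * some (d, q)) := by rw [e1, e2]
      _ = (h (some (p, c)) * h (some (c, d))) * h (some (d, q)) := by rw [hh, hh]
      _ = (h (some (p, c)) * h none) * h (some (d, q)) := by rw [hcd]
      _ = h ((some (p, c) * none) * some (d, q)) := by rw [hh, hh]
      _ = h none := by rw [mu_mul_none, mu_none_mul]

end MuAlgebra

section ClusterLemma

/-- In a space where every continuous real-valued function is bounded and Urysohn-type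
functions are available, every countable family of nonempty open sets has a "cluster point":
a point each of whose neighborhoods meets infinitely many members of the family. -/
lemma exists_cluster_point {Z : Type*} [TopologicalSpace Z]
    (hb : ∀ g : Z → ℝ, Continuous g → ∃ C : ℝ, ∀ p : Z, |g p| ≤ C)
    (ury : ∀ (q : Z) (U : Set Z), IsOpen U → q ∈ U →
      ∃ φ : Z → ℝ, Continuous φ ∧ φ q = 1 ∧ (∀ p, 0 ≤ φ p) ∧ ∀ p ∉ U, φ p = 0)
    (G : ℕ → Set Z) (hGo : ∀ k, IsOpen (G k)) (hGne : ∀ k, (G k).Nonempty) :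
    ∃ q : Z, ∀ U : Set Z, IsOpen U → q ∈ U → {k | (U ∩ G k).Nonempty}.Infinite := by
  by_contra hcon
  push_neg at hcon
  have hcon' : ∀ q : Z, ∃ U : Set Z, IsOpen U ∧ q ∈ U ∧ {k | (U ∩ G k).Nonempty}.Finite := by
    intro q
    obtain ⟨U, hU1, hU2, hU3⟩ := hcon q
    exact ⟨U, hU1, hU2, hU3⟩
  choose Uf hUo hUm hUfin using hcon'
  choose p hp using hGne
  choose φ hφc hφq hφnn hφz using fun k => ury (p k) (G k) (hGo k) (hp k)
  -- the key vanishing property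
  have key : ∀ q z : Z, z ∈ Uf q → ∀ k, k ∉ (hUfin q).toFinset → φ k z = 0 := by
    intro q z hz k hk
    by_contra hne
    have hzG : z ∈ G k := by
      by_contra hzG
      exact hne (hφz k z hzG)
    exact hk (((hUfin q).mem_toFinset).mpr ⟨z, hz, hzG⟩)
  set g : Z → ℝ := fun z => ∑' k, φ k z * ((k : ℝ) + 1) with hg
  have geq : ∀ q z : Z, z ∈ Uf q → g z = ∑ k ∈ (hUfin q).toFinset, φ k z * ((k : ℝ) + 1) := by
    intro q z hz
    exact tsum_eq_sum (fun k hk => by rw [key q z hz k hk, zero_mul])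
  have gcont : Continuous g := by
    rw [continuous_iff_continuousAt]
    intro q
    have h1 : ContinuousOn (fun z => ∑ k ∈ (hUfin q).toFinset, φ k z * ((k : ℝ) + 1)) (Uf q) :=
      (continuous_finset_sum _ (fun k _ => (hφc k).mul continuous_const)).continuousOn
    have h2 : ContinuousOn g (Uf q) := h1.congr (fun z hz => geq q z hz)
    exact h2.continuousAt ((hUo q).mem_nhds (hUm q))
  obtain ⟨C, hC⟩ := hb g gcont
  obtain ⟨k, hk⟩ := exists_nat_gt C
  have hmem : k ∈ (hUfin (p k)).toFinset :=
    ((hUfin (p k)).mem_toFinset).mpr ⟨p k, hUm (p k), hp k⟩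
  have h2 : ((k : ℝ) + 1) ≤ g (p k) := by
    have hs := Finset.single_le_sum (f := fun j => φ j (p k) * ((j : ℝ) + 1))
      (fun j _ => mul_nonneg (hφnn j (p k)) (by positivity)) hmem
    rw [geq (p k) (p k) (hUm (p k))]
    calc ((k : ℝ) + 1) = φ k (p k) * ((k : ℝ) + 1) := by rw [hφq k]; ring
      _ ≤ _ := hs
  have h3 : g (p k) ≤ C := le_trans (le_abs_self _) (hC (p k))
  linarith

end ClusterLemma

section DeltaConfig

/-- Data produced at each step of the recursive construction refuting a δ-configuration. -/
structure DeltaStep {S : Type v} [TopologicalSpace S]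
    (D : S × S → ℝ) (ν : ℝ) (ξ : S) (U : Set S) where
  O : Set S
  W : Set S
  A : Set S
  B : Set S
  pt1 : S
  pt2 : S
  hO : IsOpen O
  hW : IsOpen W
  hA : IsOpen A
  hB : IsOpen B
  hxiO : ξ ∈ O
  hbig : ∀ a ∈ O, ∀ b ∈ W, 1 - 2 * ν < D (a, b)
  hsmall : ∀ a ∈ A, ∀ b ∈ B, D (a, b) < 2 * ν
  h1A : pt1 ∈ A
  h1U : pt1 ∈ U
  h2B : pt2 ∈ B
  h2W : pt2 ∈ W

/-- A link of the recursive chain: a current open neighborhood of the anchor together with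
one step of construction data on it. -/
structure DeltaChainLink {S : Type v} [TopologicalSpace S]
    (D : S × S → ℝ) (ν : ℝ) (ξ : S) where
  U : Set S
  hU : IsOpen U
  hxiU : ξ ∈ U
  out : DeltaStep D ν ξ U

noncomputable def deltaChain {S : Type v} [TopologicalSpace S]
    (D : S × S → ℝ) (ν : ℝ) (ξ : S)
    (step : ∀ U : Set S, IsOpen U → ξ ∈ U → Nonempty (DeltaStep D ν ξ U)) :
    ℕ → DeltaChainLink D ν ξ
  | 0 => ⟨Set.univ, isOpen_univ, Set.mem_univ ξ, (step _ isOpen_univ (Set.mem_univ ξ)).some⟩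
  | (k + 1) =>
      let L := deltaChain D ν ξ step k
      ⟨L.U ∩ L.out.O, L.hU.inter L.out.hO, ⟨L.hxiU, L.out.hxiO⟩,
        (step _ (L.hU.inter L.out.hO) ⟨L.hxiU, L.out.hxiO⟩).some⟩

lemma deltaChain_succ_U {S : Type v} [TopologicalSpace S]
    (D : S × S → ℝ) (ν : ℝ) (ξ : S)
    (step : ∀ U : Set S, IsOpen U → ξ ∈ U → Nonempty (DeltaStep D ν ξ U)) (k : ℕ) :
    (deltaChain D ν ξ step (k + 1)).U
      = (deltaChain D ν ξ step k).U ∩ (deltaChain D ν ξ step k).out.O := rfl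

lemma deltaChain_mono {S : Type v} [TopologicalSpace S]
    (D : S × S → ℝ) (ν : ℝ) (ξ : S)
    (step : ∀ U : Set S, IsOpen U → ξ ∈ U → Nonempty (DeltaStep D ν ξ U))
    (k l : ℕ) (hkl : k < l) :
    (deltaChain D ν ξ step l).U ⊆ (deltaChain D ν ξ step k).out.O := by
  induction l with
  | zero => omega
  | succ n ih =>
    rcases Nat.lt_succ_iff_lt_or_eq.mp hkl with hlt | heq
    · refine (Set.Subset.trans ?_ (ih hlt))
      rw [deltaChain_succ_U]
      exact Set.inter_subset_left
    · subst heq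
      rw [deltaChain_succ_U]
      exact Set.inter_subset_right

/-- The core topological lemma: a pseudocompact square admits no "δ-configuration", i.e.
there are no sequences `x, y` and a continuous function `D` on the square with
`D (x n, y n) = 0` and `D (x n, y m) = 1` for `n ≠ m`. -/
lemma no_delta_config {S : Type v} [TopologicalSpace S] [CompletelyRegularSpace S]
    (hpc : ∀ g : S × S → ℝ, Continuous g → ∃ C : ℝ, ∀ p : S × S, |g p| ≤ C)
    (D : S × S → ℝ) (hD : Continuous D) (x y : ℕ → S)
    (hdiag : ∀ n, D (x n, y n) = 0)
    (hoff : ∀ n m, n ≠ m → D (x n, y m) = 1) : False := by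
  classical
  set ν : ℝ := 1 / 100 with hν
  have hν0 : (0 : ℝ) < ν := by norm_num [hν]
  -- Urysohn functions on S
  have uryS : ∀ (q : S) (U : Set S), IsOpen U → q ∈ U →
      ∃ φ : S → ℝ, Continuous φ ∧ φ q = 1 ∧ (∀ p, 0 ≤ φ p) ∧ ∀ p ∉ U, φ p = 0 := by
    intro q U hU hq
    obtain ⟨f, hfc, hf0, hf1⟩ :=
      CompletelyRegularSpace.completely_regular q Uᶜ hU.isClosed_compl (by simpa using hq)
    refine ⟨fun p => 1 - (f p : ℝ), continuous_const.sub (continuous_subtype_val.comp hfc),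
      ?_, ?_, ?_⟩
    · show 1 - ((f q : ℝ)) = 1
      rw [hf0]; norm_num
    · intro p
      show 0 ≤ 1 - ((f p : ℝ))
      have := (f p).2.2
      linarith
    · intro p hp
      have h1 : f p = 1 := hf1 (by simpa using hp)
      show 1 - ((f p : ℝ)) = 0
      rw [h1]; norm_num
  -- Urysohn functions on S × S, via open rectangles
  have uryS2 : ∀ (q : S × S) (U : Set (S × S)), IsOpen U → q ∈ U →
      ∃ φ : S × S → ℝ, Continuous φ ∧ φ q = 1 ∧ (∀ p, 0 ≤ φ p) ∧ ∀ p ∉ U, φ p = 0 := by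
    intro q U hU hq
    obtain ⟨U1, U2, hU1, hU2, hq1, hq2, hsub⟩ := isOpen_prod_iff.mp hU q.1 q.2 (by simpa using hq)
    obtain ⟨φ1, hφ1c, hφ1q, hφ1nn, hφ1z⟩ := uryS q.1 U1 hU1 hq1
    obtain ⟨φ2, hφ2c, hφ2q, hφ2nn, hφ2z⟩ := uryS q.2 U2 hU2 hq2
    refine ⟨fun p => φ1 p.1 * φ2 p.2, (hφ1c.comp continuous_fst).mul (hφ2c.comp continuous_snd),
      by show φ1 q.1 * φ2 q.2 = 1; rw [hφ1q, hφ2q]; norm_num,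
      fun p => mul_nonneg (hφ1nn p.1) (hφ2nn p.2), ?_⟩
    intro p hp
    have hnp : p ∉ U1 ×ˢ U2 := fun hmem => hp (hsub hmem)
    show φ1 p.1 * φ2 p.2 = 0
    rcases (not_and_or.mp (fun hc : p.1 ∈ U1 ∧ p.2 ∈ U2 => hnp ⟨hc.1, hc.2⟩)) with h | h
    · rw [hφ1z p.1 h, zero_mul]
    · rw [hφ2z p.2 h, mul_zero]
  -- boundedness of continuous functions on S itself
  have hbS : ∀ g : S → ℝ, Continuous g → ∃ C : ℝ, ∀ σ : S, |g σ| ≤ C := by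
    intro g hg
    obtain ⟨C, hC⟩ := hpc (fun p => g p.1) (hg.comp continuous_fst)
    exact ⟨C, fun σ => hC (σ, σ)⟩
  -- continuity of the partial maps of D
  have hDy : ∀ m : ℕ, Continuous fun σ : S => D (σ, y m) := fun m =>
    hD.comp (continuous_id.prodMk continuous_const)
  -- the "blobs"
  set N : ℕ → Set S := fun n =>
    {σ | D (σ, y n) < ν} ∩ ⋂ j ∈ Finset.range n, {σ | 1 - ν < D (σ, y j)} with hNdef
  have hNo : ∀ n, IsOpen (N n) := by
    intro n
    refine IsOpen.inter (isOpen_lt (hDy n) continuous_const) ?_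
    exact isOpen_biInter_finset fun j _ => isOpen_lt continuous_const (hDy j)
  have hNne : ∀ n, (N n).Nonempty := by
    intro n
    refine ⟨x n, ?_, ?_⟩
    · show D (x n, y n) < ν
      rw [hdiag n]; exact hν0
    · refine Set.mem_iInter₂.mpr fun j hj => ?_
      have hjn : j ≠ n := Nat.ne_of_lt (Finset.mem_range.mp hj)
      show 1 - ν < D (x n, y j)
      rw [hoff n j (Ne.symm hjn)]
      linarith
  -- the anchor ξ
  obtain ⟨ξ, hξ⟩ := exists_cluster_point hbS uryS N hNo hNne
  -- the anchor's row is uniformly large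
  have F1 : ∀ j, 1 - ν ≤ D (ξ, y j) := by
    intro j
    by_contra hlt
    push_neg at hlt
    have hU : IsOpen {σ : S | D (σ, y j) < 1 - ν} := isOpen_lt (hDy j) continuous_const
    have hinf := hξ _ hU hlt
    obtain ⟨n, hnmem⟩ := (hinf.diff (Set.finite_Iic j)).nonempty
    have hjn : j < n := by
      have := hnmem.2
      simpa using this
    obtain ⟨σ', hσ'U, hσ'N⟩ := hnmem.1
    have h4 : 1 - ν < D (σ', y j) :=
      Set.mem_iInter₂.mp hσ'N.2 j (Finset.mem_range.mpr hjn)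
    exact absurd hσ'U (by simp only [Set.mem_setOf_eq, not_lt]; exact h4.le)
  -- the step of the recursion
  have step : ∀ U : Set S, IsOpen U → ξ ∈ U → Nonempty (DeltaStep D ν ξ U) := by
    intro U hU hξU
    obtain ⟨n, hn⟩ := (hξ U hU hξU).nonempty
    obtain ⟨σ', hσ'U, hσ'N⟩ := hn
    have hd1 : D (σ', y n) < ν := hσ'N.1
    have hd2 : 1 - 2 * ν < D (ξ, y n) := by
      have := F1 n
      linarith
    have hEE : IsOpen {p : S × S | 1 - 2 * ν < D p} := isOpen_lt continuous_const hD
    obtain ⟨O, W, hO, hW, hξO, hyW, hOW⟩ := isOpen_prod_iff.mp hEE ξ (y n) hd2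
    have hZZ : IsOpen {p : S × S | D p < 2 * ν} := isOpen_lt hD continuous_const
    have hd3 : D (σ', y n) < 2 * ν := by linarith
    obtain ⟨A, B, hA, hB, hσA, hyB, hAB⟩ := isOpen_prod_iff.mp hZZ σ' (y n) hd3
    exact ⟨⟨O, W, A, B, σ', y n, hO, hW, hA, hB, hξO,
      fun a ha b hb => hOW (Set.mk_mem_prod ha hb),
      fun a ha b hb => hAB (Set.mk_mem_prod ha hb),
      hσA, hσ'U, hyB, hyW⟩⟩
  -- the chain and the corresponding open rectangles
  set L : ℕ → DeltaChainLink D ν ξ := deltaChain D ν ξ step with hL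
  set V : ℕ → Set (S × S) := fun k =>
    ((L k).out.A ∩ (L k).U) ×ˢ ((L k).out.B ∩ (L k).out.W) with hV
  have hVo : ∀ k, IsOpen (V k) :=
    fun k => (((L k).out.hA).inter (L k).hU).prod (((L k).out.hB).inter (L k).out.hW)
  have hVne : ∀ k, (V k).Nonempty := fun k =>
    ⟨((L k).out.pt1, (L k).out.pt2),
      Set.mk_mem_prod ⟨(L k).out.h1A, (L k).out.h1U⟩ ⟨(L k).out.h2B, (L k).out.h2W⟩⟩
  obtain ⟨q, hq⟩ := exists_cluster_point hpc uryS2 V hVo hVne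
  set v : ℝ := D q with hv
  have hEq : IsOpen {p : S × S | |D p - v| < ν} :=
    isOpen_lt ((hD.sub continuous_const).abs) continuous_const
  have hqE : (q.1, q.2) ∈ {p : S × S | |D p - v| < ν} := by
    show |D (q.1, q.2) - v| < ν
    have : D (q.1, q.2) = v := by rw [hv]
    rw [this]
    simpa using hν0
  obtain ⟨Oq, Pq, hOq, hPq, hq1, hq2, hsubE⟩ := isOpen_prod_iff.mp hEq q.1 q.2 hqE
  have hqmem : q ∈ Oq ×ˢ Pq := ⟨hq1, hq2⟩
  have hinf := hq (Oq ×ˢ Pq) (hOq.prod hPq) hqmem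
  obtain ⟨k, hk⟩ := hinf.nonempty
  obtain ⟨l, hlmem⟩ := (hinf.diff (Set.finite_Iic k)).nonempty
  have hkl : k < l := by
    have := hlmem.2
    simpa using this
  obtain ⟨p1, hp1⟩ := hk
  obtain ⟨p2, hp2⟩ := hlmem.1
  -- diagonal visit at stage k: D is small there
  have hd_small : D p1 < 2 * ν := by
    have := (L k).out.hsmall p1.1 hp1.2.1.1 p1.2 hp1.2.2.1
    simpa using this
  have h_p1E : |D p1 - v| < ν := hsubE hp1.1
  -- cross pair: first coordinate from stage l, second from stage k
  have hcrossO : p2.1 ∈ (L k).out.O :=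
    deltaChain_mono D ν ξ step k l hkl hp2.2.1.2
  have hcrossW : p1.2 ∈ (L k).out.W := hp1.2.2.2
  have hd_big : 1 - 2 * ν < D (p2.1, p1.2) :=
    (L k).out.hbig p2.1 hcrossO p1.2 hcrossW
  have h_rE : |D (p2.1, p1.2) - v| < ν := hsubE (Set.mk_mem_prod hp2.1.1 hp1.1.2)
  -- numerical contradiction
  have e1 := abs_lt.mp h_p1E
  have e2 := abs_lt.mp h_rE
  rw [hν] at hd_small hd_big e1 e2
  linarith [e1.1, e1.2, e2.1, e2.2]

end DeltaConfig

/-- Every semigroup homomorphism from an infinite semigroup of matrix units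
into a Tychonoff topological semigroup with pseudocompact square is annihilating. -/
theorem hom_matrixUnits_into_pseudocompact_square_annihilating
    {X : Type u} [Infinite X]
    {S : Type v} [Semigroup S] [TopologicalSpace S] [T2Space S] [CompletelyRegularSpace S]
    [ContinuousMul S]
    (hpc : ∀ g : S × S → ℝ, Continuous g → ∃ C : ℝ, ∀ p : S × S, |g p| ≤ C) :
    ∀ h : MatrixUnits X → S,
      (∀ a b : MatrixUnits X, h (a * b) = h a * h b) →
      ∃ c : S, ∀ x : MatrixUnits X, h x = c := by
  intro h hh
  set A : ℕ ↪ X := Infinite.natEmbedding X with hA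
  by_cases hez : h (some (A 0, A 0)) = h none
  · exact ⟨h none, mu_collapse h hh (A 0) (A 0) hez⟩
  · exfalso
    set e : S := h (some (A 0, A 0)) with he
    set z : S := h none with hz
    obtain ⟨f, hfc, hfe, hfz⟩ :=
      CompletelyRegularSpace.completely_regular e {z} isClosed_singleton (by simpa using hez)
    have hfz1 : f z = 1 := hfz rfl
    set x : ℕ → S := fun n => h (some (A 0, A (n + 1))) with hx
    set y : ℕ → S := fun m => h (some (A (m + 1), A 0)) with hy
    set D : S × S → ℝ := fun p => ((f (p.1 * p.2) : ℝ)) with hD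
    have hDc : Continuous D :=
      continuous_subtype_val.comp (hfc.comp (continuous_fst.mul continuous_snd))
    have hprod : ∀ n m : ℕ, x n * y m = if n = m then e else z := by
      intro n m
      have h1 : x n * y m = h (some (A 0, A (n + 1)) * some (A (m + 1), A 0)) := (hh _ _).symm
      have h2 : (some (A 0, A (n + 1)) : MatrixUnits X) * some (A (m + 1), A 0)
          = if n = m then some (A 0, A 0) else none := by
        rw [mu_some_some]
        by_cases hnm : n = m
        · subst hnm
          rw [if_pos rfl, if_pos rfl]
        · have hne : A (n + 1) ≠ A (m + 1) := by
            intro hc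
            exact hnm (Nat.succ_injective (A.injective hc))
          rw [if_neg hne, if_neg hnm]
      rw [h1, h2]
      by_cases hnm : n = m
      · rw [if_pos hnm, if_pos hnm]
      · rw [if_neg hnm, if_neg hnm]
    have hdiag : ∀ n, D (x n, y n) = 0 := by
      intro n
      have h1 : x n * y n = e := by rw [hprod n n, if_pos rfl]
      show ((f ((x n, y n).1 * (x n, y n).2) : ℝ)) = 0
      simp only
      rw [h1, hfe]
      norm_num
    have hoff : ∀ n m, n ≠ m → D (x n, y m) = 1 := by
      intro n m hnm
      have h1 : x n * y m = z := by rw [hprod n m, if_neg hnm]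
      show ((f ((x n, y m).1 * (x n, y m).2) : ℝ)) = 1
      simp only
      rw [h1, hfz1]
      norm_num
    exact no_delta_config hpc D hDc x y hdiag hoff
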